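/- arXiv:2110.00827 — 4 statements merged into one kernel-verified Lean document; each statement's English description precedes it below -/
import Mathlib

section
/- For every finite abelian group V and every real r ≥ 1, there exist subsets W1, W2 ⊆ V with W1 - W2 = V, |W1| ≤ 2⌈√(|V|·r)⌉, and |W2| ≤ ⌈√(|V|/r)⌉. -/
/-!
By induction on `|V|`, for every `1 ≤ m ≤ |V|` there are `A + B = V` with `|B| ≤ m` and
`|A| * m ≤ 2 |V|`; the theorem follows with `m = min ⌈√(|V|/r)⌉ |V|`, `W1 = A`, `W2 = -B`.
For the induction step pick a cyclic subgroup `H = ⟨v⟩` of order `d > 1` and index `Q`, and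
combine a decomposition of `V ⧸ H` with the covering `H ⊆ A₀ + B₀` by `A₀ = {0, b, 2b, …} • v`,
`B₀ = {0, …, b - 1} • v`, for which `|A₀| (b + 1) ≤ 2d`. If `m ≤ Q`, take `b = 1` and the
induction hypothesis for `V ⧸ H`; otherwise take `b = m / Q` and the decomposition
`{0} + (V ⧸ H)`, so that the second set is `B₀` plus a transversal of `H`, and `m < Q (b + 1)`.
-/

open Pointwise Finset

theorem exists_range_subset_add_range {b d : ℕ} (hb : 0 < b) (hbd : b ≤ d) :
    ∃ A : Finset ℕ, (range d : Set ℕ) ⊆ A + range b ∧ #A * (b + 1) ≤ 2 * d := by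
  set t := (d - 1) / b
  refine ⟨(range (t + 1)).image (· * b), fun k hk => ?_, ?_⟩
  · have hkd : k / b ≤ t := Nat.div_le_div_right (by grind)
    rw [← Nat.div_add_mod' k b]
    exact Set.add_mem_add (mem_image_of_mem _ (mem_range.2 (by omega)))
      (mem_range.2 (Nat.mod_lt k hb))
  · have htb : t * b ≤ d - 1 := Nat.div_mul_le_self _ _
    replace htb : t * b + 1 ≤ d := by omega
    have ht : t + b ≤ d := by
      rcases Nat.eq_zero_or_pos t with h | h
      · omega
      · nlinarith
    calc #((range (t + 1)).image (· * b)) * (b + 1) ≤ (t + 1) * (b + 1) := by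
          gcongr; exact card_image_le.trans (card_range _).le
      _ ≤ 2 * d := by nlinarith

section

variable {V : Type*} [AddCommGroup V]

theorem exists_zmultiples_subset_add [Finite V] (v : V) {b : ℕ} (hb : 0 < b)
    (hbv : b ≤ addOrderOf v) :
    ∃ A B : Finset V, (AddSubgroup.zmultiples v : Set V) ⊆ (A : Set V) + (B : Set V) ∧
      #B ≤ b ∧ #A * (b + 1) ≤ 2 * addOrderOf v := by
  classical
  obtain ⟨A, hA, hcard⟩ := exists_range_subset_add_range hb hbv
  refine ⟨A.image (· • v), (range b).image (· • v), fun x hx => ?_, ?_, ?_⟩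
  · rw [SetLike.mem_coe, mem_zmultiples_iff_mem_range_addOrderOf, mem_image] at hx
    obtain ⟨k, hk, rfl⟩ := hx
    obtain ⟨a, ha, c, hc, rfl⟩ := hA hk
    exact ⟨a • v, mem_image_of_mem _ ha, c • v, mem_image_of_mem _ hc, (add_nsmul v a c).symm⟩
  · exact card_image_le.trans (card_range b).le
  · exact (Nat.mul_le_mul_right _ card_image_le).trans hcard

theorem exists_add_eq_univ_of_quotient (H : AddSubgroup V) {A' B' : Finset (V ⧸ H)}
    (hAB' : (A' : Set (V ⧸ H)) + (B' : Set (V ⧸ H)) = Set.univ) {A₀ B₀ : Finset V}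
    (hH : (H : Set V) ⊆ (A₀ : Set V) + (B₀ : Set V)) :
    ∃ A B : Finset V, (A : Set V) + (B : Set V) = Set.univ ∧
      #A ≤ #A' * #A₀ ∧ #B ≤ #B' * #B₀ := by
  classical
  refine ⟨A'.image Quotient.out + A₀, B'.image Quotient.out + B₀,
    Set.eq_univ_of_forall fun x => ?_, card_add_le.trans (by gcongr; exact card_image_le),
    card_add_le.trans (by gcongr; exact card_image_le)⟩
  obtain ⟨a', ha', b', hb', hx : a' + b' = x⟩ := hAB'.symm ▸ Set.mem_univ (x : V ⧸ H)
  have hmem : x - (a'.out + b'.out) ∈ H := by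
    rw [← QuotientAddGroup.eq_iff_sub_mem, QuotientAddGroup.mk_add, QuotientAddGroup.out_eq',
      QuotientAddGroup.out_eq', hx]
  obtain ⟨a₀, ha₀, b₀, hb₀, h₀ : a₀ + b₀ = _⟩ := hH hmem
  rw [coe_add, coe_add]
  refine ⟨a'.out + a₀, Set.add_mem_add (mem_image_of_mem _ ha') ha₀,
    b'.out + b₀, Set.add_mem_add (mem_image_of_mem _ hb') hb₀, ?_⟩
  change a'.out + a₀ + (b'.out + b₀) = x
  rw [add_add_add_comm, h₀, add_sub_cancel]

theorem exists_add_eq_univ_card_mul_le [Finite V] {m : ℕ} (hm : 0 < m) (hmV : m ≤ Nat.card V) :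
    ∃ A B : Finset V, (A : Set V) + (B : Set V) = Set.univ ∧
      #B ≤ m ∧ #A * m ≤ 2 * Nat.card V := by
  obtain ⟨n, hn⟩ : ∃ n, Nat.card V = n := ⟨_, rfl⟩
  induction n using Nat.strong_induction_on generalizing V m with
  | _ n ih =>
  subst hn
  rcases subsingleton_or_nontrivial V with _ | _
  · refine ⟨{0}, {0}, Set.eq_univ_of_forall fun x => ?_, by rwa [card_singleton],
    by rw [card_singleton, one_mul]; omega⟩
    simp [Subsingleton.elim x 0]
  obtain ⟨v, hv⟩ := exists_ne (0 : V)
  set H := AddSubgroup.zmultiples v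
  set d := addOrderOf v
  set Q := Nat.card (V ⧸ H)
  have hQd : Q * d = Nat.card V := by
    rw [H.card_eq_card_quotient_mul_card_addSubgroup, Nat.card_zmultiples]
  have hd : 1 < d :=
    lt_of_le_of_ne (addOrderOf_pos v) fun h => hv (AddMonoid.addOrderOf_eq_one_iff.1 h.symm)
  have hQ : 0 < Q := Nat.card_pos
  rcases le_or_gt m Q with hmQ | hQm
  · obtain ⟨A', B', hAB', hB', hA'⟩ := ih Q (by nlinarith) hm hmQ rfl
    obtain ⟨A₀, B₀, hH, hB₀, hA₀⟩ := exists_zmultiples_subset_add v one_pos hd.le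
    obtain ⟨A, B, hAB, hA, hB⟩ := exists_add_eq_univ_of_quotient H hAB' hH
    refine ⟨A, B, hAB, hB.trans (by nlinarith), ?_⟩
    calc #A * m ≤ #A' * #A₀ * m := by gcongr
      _ = #A' * m * #A₀ := by ring
      _ ≤ 2 * Q * d := by nlinarith
      _ = 2 * Nat.card V := by rw [mul_assoc, hQd]
  · set b := m / Q
    have hb : 0 < b := Nat.div_pos hQm.le hQ
    have hbd : b ≤ d := Nat.div_le_of_le_mul (hQd ▸ hmV)
    obtain ⟨A₀, B₀, hH, hB₀, hA₀⟩ := exists_zmultiples_subset_add v hb hbd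
    have := Fintype.ofFinite (V ⧸ H)
    obtain ⟨A, B, hAB, hA, hB⟩ :=
      exists_add_eq_univ_of_quotient H (A' := {0}) (B' := univ) (by simp) hH
    refine ⟨A, B, hAB, ?_, ?_⟩
    · calc #B ≤ Q * b := by
            rw [card_univ, Fintype.card_eq_nat_card] at hB
            exact hB.trans (Nat.mul_le_mul_left Q hB₀)
        _ ≤ m := Nat.mul_div_le m Q
    · calc #A * m ≤ #A₀ * (Q * (b + 1)) := by
            rw [card_singleton, one_mul] at hA
            exact Nat.mul_le_mul hA (Nat.lt_mul_div_succ m hQ).le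
        _ = Q * (#A₀ * (b + 1)) := by ring
        _ ≤ Q * (2 * d) := Nat.mul_le_mul_left Q hA₀
        _ = 2 * Nat.card V := by rw [← hQd]; ring

end

theorem le_ceil_sqrt_mul_mul_ceil_sqrt_div {x r : ℝ} (hx : 0 ≤ x) (hr : 0 < r) :
    x ≤ ⌈√(x * r)⌉₊ * ⌈√(x / r)⌉₊ := by
  have hsq : x * r * (x / r) = x * x := by field_simp
  calc x = √(x * r) * √(x / r) := by
        rw [← Real.sqrt_mul (by positivity), hsq, Real.sqrt_mul_self hx]
    _ ≤ ⌈√(x * r)⌉₊ * ⌈√(x / r)⌉₊ :=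
        mul_le_mul (Nat.le_ceil _) (Nat.le_ceil _) (Real.sqrt_nonneg _) (Nat.cast_nonneg _)

theorem stmt6 (V : Type*) [AddCommGroup V] [Fintype V] (r : ℝ) (hr : 1 ≤ r) :
    ∃ W1 W2 : Finset V, (W1 : Set V) - (W2 : Set V) = Set.univ ∧
      W1.card ≤ 2 * ⌈Real.sqrt ((Fintype.card V : ℝ) * r)⌉₊ ∧
      W2.card ≤ ⌈Real.sqrt ((Fintype.card V : ℝ) / r)⌉₊ := by
  classical
  set n := Fintype.card V
  set c := ⌈√((n : ℝ) * r)⌉₊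
  set m := ⌈√((n : ℝ) / r)⌉₊
  have hn : 0 < n := Fintype.card_pos
  have hr₀ : 0 < r := by linarith
  have hc : 0 < c := Nat.ceil_pos.2 (Real.sqrt_pos.2 (by positivity))
  have hm : 0 < m := Nat.ceil_pos.2 (Real.sqrt_pos.2 (by positivity))
  have hcm : n ≤ c * min m n := by
    rw [← Nat.mul_min_mul_left]
    exact le_min (by exact_mod_cast le_ceil_sqrt_mul_mul_ceil_sqrt_div n.cast_nonneg hr₀)
      (Nat.le_mul_of_pos_left n hc)
  obtain ⟨A, B, hAB, hB, hA⟩ := exists_add_eq_univ_card_mul_le (V := V) (lt_min hm hn)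
    (Nat.card_eq_fintype_card (α := V) ▸ min_le_right m n)
  refine ⟨A, -B, by rw [coe_neg, sub_neg_eq_add, hAB], ?_, by
    rw [card_neg]; exact hB.trans (min_le_left _ _)⟩
  rw [Nat.card_eq_fintype_card] at hA
  refine Nat.le_of_mul_le_mul_right (hA.trans ?_) (lt_min hm hn)
  rw [mul_assoc]
  exact Nat.mul_le_mul_left 2 hcm
end

section
/- Every finite abelian group V admits subsets W1, W2 with W1 - W2 = V and |W1| + |W2| ≤ 3⌈√|V|⌉ + 1 (in particular both of size O(√|V|)). -/
/-!
Let `m = ⌈√|V|⌉`, let `H` be maximal among the subgroups of order at most `m`, and pick `g ∉ H`.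
Then `K = H + ⟨g⟩` has order `|H| · c > m`, where `c` is the order of `g` modulo `H`. With
`s = ⌊m / |H|⌋` and `t = ⌈c / s⌉`, every element of `K` is `y + (j s + i) • g` with `y ∈ H`,
`j < t`, `i < s`. So if `R` is a transversal of `K`, then `A = R + {j s • g | j < t}` and
`B = H + {i • g | i < s}` satisfy `A + B = V`, `|B| ≤ s |H| ≤ m` and `|A| ≤ t [V : K] ≤ 2m`.
Take `W1 = A` and `W2 = -B`.
-/

open Pointwise Finset

section multiplesBelow

variable {V : Type*} [AddMonoid V] [DecidableEq V]

def multiplesBelow (g : V) (n : ℕ) : Finset V := (range n).image (· • g)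

theorem card_multiplesBelow_le (g : V) (n : ℕ) : (multiplesBelow g n).card ≤ n :=
  card_image_le.trans (card_range n).le

theorem nsmul_mem_multiplesBelow (g : V) {k n : ℕ} (hk : k < n) : k • g ∈ multiplesBelow g n :=
  mem_image_of_mem _ (mem_range.2 hk)

theorem multiplesBelow_nsmul_add_multiplesBelow (g : V) (s t : ℕ) :
    multiplesBelow (s • g) t + multiplesBelow g s = multiplesBelow g (t * s) := by
  ext x
  simp only [multiplesBelow, mem_add, mem_image, mem_range]
  constructor
  · rintro ⟨_, ⟨j, hj, rfl⟩, _, ⟨i, hi, rfl⟩, rfl⟩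
    refine ⟨j * s + i, by nlinarith, ?_⟩
    rw [add_nsmul, mul_nsmul']
  · rintro ⟨k, hk, rfl⟩
    have hs : 0 < s := Nat.pos_of_mul_pos_left (Nat.zero_lt_of_lt hk)
    refine ⟨_, ⟨k / s, Nat.div_lt_of_lt_mul (by rwa [mul_comm]), rfl⟩,
      _, ⟨k % s, Nat.mod_lt k hs, rfl⟩, ?_⟩
    rw [← mul_nsmul', ← add_nsmul, Nat.div_add_mod']

end multiplesBelow

theorem AddSubgroup.exists_add_nsmul_of_mem_sup_zmultiples {V : Type*} [AddCommGroup V]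
    (H : AddSubgroup V) {g : V} {c : ℕ} (hc : 0 < c) (hcg : c • g ∈ H) {x : V}
    (hx : x ∈ H ⊔ AddSubgroup.zmultiples g) : ∃ y ∈ H, ∃ k < c, y + k • g = x := by
  obtain ⟨y, hy, _, ⟨a, rfl⟩, rfl⟩ := AddSubgroup.mem_sup.1 hx
  have hc' : (0 : ℤ) < c := by exact_mod_cast hc
  have hr : 0 ≤ a % c := Int.emod_nonneg a hc'.ne'
  refine ⟨y + (a / c) • (c • g), H.add_mem hy (H.zsmul_mem hcg _), (a % c).toNat,
    by have := Int.emod_lt_of_pos a hc'; omega, ?_⟩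
  rw [add_assoc, ← natCast_zsmul g c, ← natCast_zsmul g (a % c).toNat, Int.toNat_of_nonneg hr,
    smul_smul, ← add_zsmul, mul_comm, Int.mul_ediv_add_emod]

theorem AddSubgroup.exists_card_le_lt_card_sup_zmultiples {V : Type*} [AddGroup V] [Finite V]
    {m : ℕ} (hm : 0 < m) (hmV : m < Nat.card V) :
    ∃ (H : AddSubgroup V) (g : V),
      Nat.card H ≤ m ∧ m < Nat.card ↥(H ⊔ AddSubgroup.zmultiples g) := by
  obtain ⟨H, -, hHm, hHmax⟩ :=
    exists_maximal_ge_of_wellFoundedGT (fun H : AddSubgroup V => Nat.card H ≤ m) ⊥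
      (by rwa [AddSubgroup.card_bot])
  obtain ⟨g, hg⟩ : ∃ g, g ∉ H := by
    by_contra! hall
    rw [(AddSubgroup.eq_top_iff' H).2 hall, AddSubgroup.card_top] at hHm
    omega
  have hlt : H < H ⊔ AddSubgroup.zmultiples g :=
    SetLike.lt_iff_le_and_exists.2
      ⟨le_sup_left, g, AddSubgroup.mem_sup_right (AddSubgroup.mem_zmultiples g), hg⟩
  exact ⟨H, g, hHm, not_le.1 fun hle => hlt.not_ge (hHmax hle hlt.le)⟩

theorem mul_le_two_mul_of_mul_le_sq {m h c k N s t : ℕ} (hs : 0 < s) (hsh : s * h ≤ m)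
    (hms : m < s * h + h) (hmk : m < k) (hNk : N * k ≤ m ^ 2) (hck : h * c ≤ k)
    (hts : t * s < c + s) : t * N ≤ 2 * m := by
  -- `t s N h ≤ N h c + N (s h - h) ≤ m ^ 2 + (m - 1) (s h - h) ≤ 2 m s h`, using `m < s h + h`
  have hNm : N + 1 ≤ m := by nlinarith
  have hhx : h ≤ s * h := Nat.le_mul_of_pos_left h hs
  have key : t * N * (s * h) ≤ 2 * m * (s * h) := by
    nlinarith [Nat.mul_le_mul_right (N * h) hts, Nat.mul_le_mul_left N hck,
      Nat.mul_le_mul (Nat.le_sub_of_add_le hNm) (Nat.sub_le_sub_right hhx h)]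
  exact Nat.le_of_mul_le_mul_right key (by nlinarith)

theorem exists_add_eq_univ_of_nsmul_mem {V : Type*} [AddCommGroup V] [Fintype V] [DecidableEq V]
    (H : AddSubgroup V) {g : V} {c : ℕ} (hc : 0 < c) (hcg : c • g ∈ H) {s t : ℕ}
    (hct : c ≤ t * s) :
    ∃ A B : Finset V, A + B = univ ∧ A.card ≤ t * (H ⊔ AddSubgroup.zmultiples g).index ∧
      B.card ≤ s * Nat.card H := by
  classical
  set K := H ⊔ AddSubgroup.zmultiples g
  let R : Finset V := univ.image fun q : V ⧸ K => q.out
  let HFin : Finset V := univ.filter (· ∈ H)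
  refine ⟨R + multiplesBelow (s • g) t, HFin + multiplesBelow g s, ?_, ?_, ?_⟩
  · refine eq_univ_of_forall fun v => ?_
    obtain ⟨x, hx⟩ := QuotientAddGroup.mk_out_eq_add K v
    obtain ⟨y, hy, k, hk, hyk⟩ :=
      H.exists_add_nsmul_of_mem_sup_zmultiples hc hcg (neg_mem x.2)
    obtain ⟨a, ha, b, hb, hab⟩ := mem_add.1 <|
      (multiplesBelow_nsmul_add_multiplesBelow g s t).symm ▸
        nsmul_mem_multiplesBelow g (hk.trans_le hct)
    refine mem_add.2 ⟨(v : V ⧸ K).out + a, add_mem_add (mem_image_of_mem _ (mem_univ _)) ha,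
      y + b, add_mem_add (by simpa [HFin]) hb, ?_⟩
    rw [add_add_add_comm, hab, add_assoc, hyk, hx, add_neg_cancel_right]
  · calc (R + multiplesBelow (s • g) t).card ≤ R.card * t :=
          card_add_le.trans (Nat.mul_le_mul_left _ (card_multiplesBelow_le _ _))
      _ ≤ K.index * t := by
          gcongr
          exact card_image_le.trans
            (by rw [card_univ, AddSubgroup.index, Nat.card_eq_fintype_card])
      _ = t * K.index := mul_comm _ _
  · calc (HFin + multiplesBelow g s).card ≤ Nat.card H * s := by
          refine card_add_le.trans (Nat.mul_le_mul ?_ (card_multiplesBelow_le _ _))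
          rw [Nat.card_eq_fintype_card, Fintype.card_subtype]
      _ = s * Nat.card H := mul_comm _ _

theorem exists_add_eq_univ_card_le {V : Type*} [AddCommGroup V] [Fintype V] [DecidableEq V]
    {m : ℕ} (hm : 0 < m) (hV : Fintype.card V ≤ m ^ 2) :
    ∃ A B : Finset V, A + B = univ ∧ A.card ≤ 2 * m ∧ B.card ≤ m := by
  rcases le_or_gt (Fintype.card V) m with hVm | hmV
  · refine ⟨univ, {0}, ?_, by rw [card_univ]; omega, by rw [card_singleton]; omega⟩
    exact eq_univ_of_forall fun v => mem_add.2 ⟨v, mem_univ v, 0, mem_singleton_self 0, add_zero v⟩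
  rw [← Nat.card_eq_fintype_card] at hV hmV
  obtain ⟨H, g, hHm, hmK⟩ := AddSubgroup.exists_card_le_lt_card_sup_zmultiples hm hmV
  set K := H ⊔ AddSubgroup.zmultiples g
  set c := H.relIndex K
  have hHK : Nat.card H * c = Nat.card K := by
    simpa using AddSubgroup.relIndex_mul_relIndex ⊥ H K bot_le le_sup_left
  have hc : 0 < c := Nat.pos_of_mul_pos_left (hHK ▸ Nat.card_pos)
  have hcg : c • g ∈ H :=
    H.nsmul_relIndex_mem (AddSubgroup.mem_sup_right (AddSubgroup.mem_zmultiples g))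
  set s := m / Nat.card H
  have hs : 0 < s := Nat.div_pos hHm Nat.card_pos
  set t := (c - 1) / s + 1
  have hts : c ≤ t * s ∧ t * s < c + s := by
    have := Nat.lt_div_mul_add (a := c - 1) hs
    have := Nat.div_mul_le_self (c - 1) s
    constructor <;> simp only [t, add_mul, one_mul] <;> omega
  obtain ⟨A, B, hAB, hA, hB⟩ := exists_add_eq_univ_of_nsmul_mem H hc hcg hts.1
  refine ⟨A, B, hAB, hA.trans ?_, hB.trans (Nat.div_mul_le_self m _)⟩
  exact mul_le_two_mul_of_mul_le_sq hs (Nat.div_mul_le_self _ _) (Nat.lt_div_mul_add Nat.card_pos)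
    hmK (K.index_mul_card ▸ hV) hHK.le hts.2

theorem stmt7 (V : Type*) [AddCommGroup V] [Fintype V] :
    ∃ W1 W2 : Finset V, (W1 : Set V) - (W2 : Set V) = Set.univ ∧
      W1.card + W2.card ≤ 3 * ⌈Real.sqrt (Fintype.card V : ℝ)⌉₊ + 1 := by
  classical
  set m := ⌈Real.sqrt (Fintype.card V : ℝ)⌉₊
  have hm : 0 < m := Nat.ceil_pos.2 (Real.sqrt_pos.2 (by exact_mod_cast Fintype.card_pos))
  have hV : Fintype.card V ≤ m ^ 2 := by
    exact_mod_cast (Real.sqrt_le_left (Nat.cast_nonneg m)).1 (Nat.le_ceil _)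
  obtain ⟨A, B, hAB, hA, hB⟩ := exists_add_eq_univ_card_le hm hV
  refine ⟨A, -B, ?_, ?_⟩
  · rw [coe_neg, sub_neg_eq_add, ← coe_add, hAB, coe_univ]
  · rw [card_neg]
    omega
end

section
/- Let G = G' × Z_{p^k} with p prime, H ≤ G, and H' = H ∩ (G' × {0}). Suppose h ∈ H has Z_{p^k}-component equal to p^j for some 0 ≤ j < k, and j is minimal: every element of H has Z_{p^k}-component divisible by p^j. Then H = H' + ⟨h⟩ and the index [H : H'] divides p^{k-j}. -/
/-! Minimality of `j` says that the projection `f` to `ℤ/p^k` maps `H` into `⟨f h⟩ = ⟨p^j⟩`. Hence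
every `g ∈ H` differs from a multiple of `h` by an element of `H ∩ ker f = H'`, and `H / H'` embeds
in `⟨p^j⟩`, a group of order `p^(k-j)`. -/

namespace AddSubgroup

variable {A B : Type*} [AddCommGroup A] [AddGroup B]

theorem eq_inf_ker_sup_closure_of_map_le_zmultiples (f : A →+ B) {H : AddSubgroup A} {h : A}
    (hh : h ∈ H) (hH : H.map f ≤ zmultiples (f h)) : H = H ⊓ f.ker ⊔ closure {h} := by
  refine le_antisymm (fun g hg => ?_) (sup_le inf_le_left ((closure_le _).mpr (by simpa using hh)))
  obtain ⟨n, hn⟩ := hH (mem_map_of_mem f hg)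
  have hker : g - n • h ∈ H ⊓ f.ker := by
    refine mem_inf.mpr ⟨sub_mem hg (zsmul_mem hh n), ?_⟩
    rw [AddMonoidHom.mem_ker, map_sub, map_zsmul, ← hn, sub_self]
  rw [mem_sup]
  exact ⟨_, hker, n • h, zsmul_mem (mem_closure_singleton_self h) n, sub_add_cancel g _⟩

theorem relIndex_inf_ker_dvd_addOrderOf (f : A →+ B) {H : AddSubgroup A} {a : B}
    (hH : H.map f ≤ zmultiples a) : (H ⊓ f.ker).relIndex H ∣ addOrderOf a := by
  rw [inf_relIndex_left, relIndex_ker, ← Nat.card_zmultiples]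
  exact card_dvd_of_le hH

end AddSubgroup

namespace ZMod

theorem mem_zmultiples_of_dvd {n : ℕ} {a b : ZMod n} (hab : a ∣ b) :
    b ∈ AddSubgroup.zmultiples a := by
  obtain ⟨c, rfl⟩ := hab
  exact ⟨cast c, show _ • _ = _ by rw [zsmul_eq_mul, intCast_zmod_cast, mul_comm]⟩

theorem addOrderOf_pow_natCast {p k j : ℕ} (hp : 0 < p) (hj : j ≤ k) :
    addOrderOf ((p : ZMod (p ^ k)) ^ j) = p ^ (k - j) := by
  rw [← Nat.cast_pow, addOrderOf_coe _ (pow_pos hp k).ne', Nat.gcd_eq_right (pow_dvd_pow p hj),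
    Nat.pow_div hj hp]

end ZMod

theorem stmt9_general (G' : Type*) [AddCommGroup G'] (p k : ℕ) (hp : p.Prime)
    (H H' : AddSubgroup (G' × ZMod (p ^ k)))
    (hH' : H' = H ⊓ (AddMonoidHom.snd G' (ZMod (p ^ k))).ker)
    (h : G' × ZMod (p ^ k)) (hh : h ∈ H) (j : ℕ) (hj : j < k)
    (hh2 : h.2 = (p : ZMod (p ^ k)) ^ j)
    (hmin : ∀ g ∈ H, ((p : ZMod (p ^ k)) ^ j) ∣ g.2) :
    H = H' ⊔ AddSubgroup.closure {h} ∧ H'.relIndex H ∣ p ^ (k - j) := by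
  have hmap : H.map (AddMonoidHom.snd G' (ZMod (p ^ k))) ≤
      AddSubgroup.zmultiples (AddMonoidHom.snd G' (ZMod (p ^ k)) h) := by
    rintro _ ⟨g, hg, rfl⟩
    rw [AddMonoidHom.coe_snd, hh2]
    exact ZMod.mem_zmultiples_of_dvd (hmin g hg)
  subst hH'
  refine ⟨AddSubgroup.eq_inf_ker_sup_closure_of_map_le_zmultiples _ hh hmap, ?_⟩
  have hindex := AddSubgroup.relIndex_inf_ker_dvd_addOrderOf _ hmap
  rwa [AddMonoidHom.coe_snd, hh2, ZMod.addOrderOf_pow_natCast hp.pos hj.le] at hindex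

theorem stmt9 (G' : Type*) [AddCommGroup G'] [Finite G'] (p k : ℕ) (hp : p.Prime)
    (H H' : AddSubgroup (G' × ZMod (p ^ k)))
    (hH' : H' = H ⊓ (AddMonoidHom.snd G' (ZMod (p ^ k))).ker)
    (h : G' × ZMod (p ^ k)) (hh : h ∈ H) (j : ℕ) (hj : j < k)
    (hh2 : h.2 = (p : ZMod (p ^ k)) ^ j)
    (hmin : ∀ g ∈ H, ((p : ZMod (p ^ k)) ^ j) ∣ g.2) :
    H = H' ⊔ AddSubgroup.closure {h} ∧ H'.relIndex H ∣ p ^ (k - j) :=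
  stmt9_general G' p k hp H H' hH' h hh j hj hh2 hmin
end

section
/- Let G = Z_{p1^{k1}} × ... × Z_{pl^{kl}} and H ≤ G. Define d = min over nonzero h ∈ H of the largest index of a nonzero coordinate of h (d = l+1 if H is trivial). If H is nontrivial, then |H| divides ∏_{i=d}^{l} p_i^{k_i}, and consequently ∏_{i=1}^{d-1} p_i^{k_i} ≤ |G|/|H|. -/
/-!
Every nonzero element of `H` has a nonzero coordinate of index at least `d`, so restricting `H`
to the coordinates `d, …, l` is injective. Hence `|H|` divides the order of that factor of `G`,
and `|G| / |H|` is at least the order of the complementary factor.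
-/

open Finset

theorem AddSubgroup.card_dvd_card_pi_subtype {ι : Type*} {G : ι → Type*} [∀ i, AddGroup (G i)]
    (H : AddSubgroup (∀ i, G i)) (P : ι → Prop)
    (hP : ∀ x ∈ H, x ≠ 0 → ∃ i, P i ∧ x i ≠ 0) :
    Nat.card H ∣ Nat.card (∀ i : {i // P i}, G i) := by
  let restrict : H →+ ∀ i : {i // P i}, G i :=
    (AddMonoidHom.pi fun i : {i // P i} => Pi.evalAddMonoidHom G i).comp H.subtype
  refine AddSubgroup.card_dvd_of_injective restrict ((injective_iff_map_eq_zero _).2 ?_)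
  intro x hx
  by_contra hx0
  obtain ⟨i, hi, hxi⟩ := hP x x.2 (by simpa using hx0)
  exact hxi (congr_fun hx ⟨i, hi⟩)

theorem Nat.card_pi_subtype {ι : Type*} [Fintype ι] {G : ι → Type*} (P : ι → Prop)
    [DecidablePred P] :
    Nat.card (∀ i : {i // P i}, G i) = ∏ i, if P i then Nat.card (G i) else 1 := by
  rw [Nat.card_pi, ← prod_filter]
  exact (prod_subtype _ (fun i => by simp) fun i => Nat.card (G i)).symm

theorem Fintype.prod_eq_prod_ite_not_mul_prod_ite {ι M : Type*} [Fintype ι] [CommMonoid M]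
    (P : ι → Prop) [DecidablePred P] (f : ι → M) :
    ∏ i, f i = (∏ i, if ¬P i then f i else 1) * ∏ i, if P i then f i else 1 := by
  rw [← prod_mul_distrib]
  refine Fintype.prod_congr _ _ fun i => ?_
  by_cases h : P i <;> simp [h]

theorem Nat.le_mul_div_of_dvd {a b c : ℕ} (ha : a ∣ c) (hc : 0 < c) : b ≤ b * c / a := by
  rw [Nat.mul_div_assoc _ ha]
  exact Nat.le_mul_of_pos_right _ (Nat.div_pos (Nat.le_of_dvd hc ha) (Nat.pos_of_dvd_of_pos ha hc))

theorem stmt12_general (l : ℕ) (p k : Fin l → ℕ) (hp : ∀ i, (p i).Prime)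
    (H : AddSubgroup (∀ i : Fin l, ZMod (p i ^ k i))) (d : ℕ)
    (hmin : ∀ h ∈ H, h ≠ 0 → ∃ m : Fin l, d ≤ (m : ℕ) + 1 ∧ h m ≠ 0) :
    Nat.card H ∣ ∏ i : Fin l, (if d ≤ (i : ℕ) + 1 then p i ^ k i else 1) ∧
    ∏ i : Fin l, (if (i : ℕ) + 1 < d then p i ^ k i else 1) ≤
      Nat.card (∀ i : Fin l, ZMod (p i ^ k i)) / Nat.card H := by
  have : ∀ i, NeZero (p i ^ k i) := fun i => ⟨pow_ne_zero _ (hp i).ne_zero⟩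
  have hdvd : Nat.card H ∣ ∏ i : Fin l, (if d ≤ (i : ℕ) + 1 then p i ^ k i else 1) :=
    (H.card_dvd_card_pi_subtype _ hmin).trans <| dvd_of_eq <| by
      simp only [Nat.card_pi_subtype (G := fun i => ZMod (p i ^ k i)), Nat.card_zmod]
  refine ⟨hdvd, ?_⟩
  rw [Nat.card_pi, Fintype.prod_congr _ _ fun i => Nat.card_zmod (p i ^ k i),
    Fintype.prod_eq_prod_ite_not_mul_prod_ite (fun i : Fin l => d ≤ (i : ℕ) + 1)
      fun i => p i ^ k i]
  simp only [not_le]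
  exact Nat.le_mul_div_of_dvd hdvd (prod_pos fun i _ => by split_ifs <;> simp [(hp i).pos])

theorem stmt12 (l : ℕ) (p k : Fin l → ℕ) (hp : ∀ i, (p i).Prime) (hk : ∀ i, 1 ≤ k i)
    (H : AddSubgroup (∀ i : Fin l, ZMod (p i ^ k i))) (d : ℕ)
    (hmem : ∃ h ∈ H, h ≠ 0 ∧ ∀ m : Fin l, d < (m : ℕ) + 1 → h m = 0)
    (hmin : ∀ h ∈ H, h ≠ 0 → ∃ m : Fin l, d ≤ (m : ℕ) + 1 ∧ h m ≠ 0) :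
    Nat.card H ∣ ∏ i : Fin l, (if d ≤ (i : ℕ) + 1 then p i ^ k i else 1) ∧
    ∏ i : Fin l, (if (i : ℕ) + 1 < d then p i ^ k i else 1) ≤
      Nat.card (∀ i : Fin l, ZMod (p i ^ k i)) / Nat.card H :=
  stmt12_general l p k hp H d hmin
end
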